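/- The translation ρ of RoCTL* into ALTL is truth-preserving: for every RoCTL* formula φ, every RoCTL-structure M in which each atom of the form p_{Aψ} holds at exactly the worlds where the state formula Aψ holds, and every fullpath σ through M: M,σ ⊨ φ iff M,σ ⊨ ρ(φ). -/

import Mathlib

/-! Structural induction on the RoCTL* formula, generalised over all fullpaths. Each clause of ρ
mirrors the semantics of its operator: `A` and `O` are read off the valuation of the atoms
`p_{Aψ}` (with `NG¬v` expressing failure-freeness, so `O` becomes `A` restricted to failure-free
paths), and `▲φ` holds iff `φ` holds on the path itself and no deviation satisfies `¬φ`, which is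
`¬(¬ρφ ∨ A_{Λ¬ρφ})`. -/
namespace Stmt14
/-- A structure: a set of worlds `W`, a binary accessibility relation and a
valuation assigning to each world the set of atoms true there. -/
structure KStruct (V : Type) (W : Type) where
  rel : W → W → Prop
  val : W → Set V

variable {V W W' : Type}

/-- The accessibility relation is serial. -/
def KStruct.Serial (M : KStruct V W) : Prop := ∀ w, ∃ v, M.rel w v

/-- `σ` is a fullpath through `M`. -/
def IsFullpath (M : KStruct V W) (σ : ℕ → W) : Prop := ∀ i, M.rel (σ i) (σ (i + 1))

/-- The suffix `σ≥n` of a fullpath. -/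
def suffix (σ : ℕ → W) (n : ℕ) : ℕ → W := fun i => σ (i + n)

/-- A fullpath is failure-free iff the violation atom is false at all
positions `i > 0`. -/
def FailureFree (M : KStruct V W) (viol : V) (σ : ℕ → W) : Prop :=
  ∀ i, 0 < i → viol ∉ M.val (σ i)

/-- A RoCTL-structure: serial, and every world starts some failure-free fullpath. -/
def IsRoCTL (M : KStruct V W) (viol : V) : Prop :=
  M.Serial ∧ ∀ w, ∃ σ, IsFullpath M σ ∧ σ 0 = w ∧ FailureFree M viol σ

/-- `π` is a deviation from `σ`: for some `i`, `π≤i = σ≤i` and `π≥(i+1)` is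
failure-free. -/
def IsDeviation (M : KStruct V W) (viol : V) (σ π : ℕ → W) : Prop :=
  ∃ i, (∀ j ≤ i, π j = σ j) ∧ FailureFree M viol (suffix π (i + 1))

/-- RoCTL* formulas: atoms, ¬, ∧, U, N, A, O, ▲. -/
inductive Form (V : Type) : Type where
  | atom : V → Form V
  | neg : Form V → Form V
  | conj : Form V → Form V → Form V
  | untl : Form V → Form V → Form V
  | next : Form V → Form V
  | fall : Form V → Form V
  | oblig : Form V → Form V
  | robust : Form V → Form V

/-- Truth of a RoCTL* formula on a fullpath. -/
def sat (M : KStruct V W) (viol : V) : Form V → (ℕ → W) → Prop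
  | .atom p, σ => p ∈ M.val (σ 0)
  | .neg φ, σ => ¬ sat M viol φ σ
  | .conj φ ψ, σ => sat M viol φ σ ∧ sat M viol ψ σ
  | .untl φ ψ, σ => ∃ i, sat M viol ψ (suffix σ i) ∧ ∀ j < i, sat M viol φ (suffix σ j)
  | .next φ, σ => sat M viol φ (suffix σ 1)
  | .fall φ, σ => ∀ π, IsFullpath M π → π 0 = σ 0 → sat M viol φ π
  | .oblig φ, σ => ∀ π, IsFullpath M π → π 0 = σ 0 → FailureFree M viol π → sat M viol φ π
  | .robust φ, σ => sat M viol φ σ ∧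
      ∀ π, IsFullpath M π → IsDeviation M viol σ π → sat M viol φ π

/-- RoCTL* formulas have atoms ranging over `V \ {viol}`. -/
def ViolFree (viol : V) : Form V → Prop
  | .atom p => p ≠ viol
  | .neg φ => ViolFree viol φ
  | .conj φ ψ => ViolFree viol φ ∧ ViolFree viol ψ
  | .untl φ ψ => ViolFree viol φ ∧ ViolFree viol ψ
  | .next φ => ViolFree viol φ
  | .fall φ => ViolFree viol φ
  | .oblig φ => ViolFree viol φ
  | .robust φ => ViolFree viol φ
/-- A finite state automaton with alphabet `A` and state type `Q`. -/
structure FSA (A : Type u) (Q : Type v) where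
  start : Set Q
  trans : Q → A → Q → Prop
  accept : Set Q

/-- `ReachesVia tr p u q` : there is a path through the transition relation `tr`
from `p` to `q` whose label is the word `u`. -/
def ReachesVia {Q : Type u} {A : Type v} (tr : Q → A → Q → Prop) : Q → List A → Q → Prop
  | p, [], q => p = q
  | p, e :: u, q => ∃ r, tr p e r ∧ ReachesVia tr r u q

/-- `u ^ m` : the word `u` repeated `m` times. -/
def wpow {A : Type v} (u : List A) : ℕ → List A
  | 0 => []
  | n + 1 => u ++ wpow u n

/-- A transition relation is counter-free iff for all positive `m`, states `s`
and words `u`, if `u ^ m` labels a path from `s` to `s` then so does `u`. -/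
def CounterFreeRel {Q : Type u} {A : Type v} (tr : Q → A → Q → Prop) : Prop :=
  ∀ m : ℕ, 0 < m → ∀ (s : Q) (u : List A), ReachesVia tr s (wpow u m) s → ReachesVia tr s u s

/-- An automaton is counter-free iff its transition relation is. -/
def FSA.CounterFree {A : Type u} {Q : Type v} (M : FSA A Q) : Prop := CounterFreeRel M.trans

/-- The automaton accepts a finite word. -/
def FSA.acceptsWord {A : Type u} {Q : Type v} (M : FSA A Q) (w : List A) : Prop :=
  ∃ q₀ ∈ M.start, ∃ q ∈ M.accept, ReachesVia M.trans q₀ w q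

/-- `A^x` : the automaton `A` with initial state set `{x}`. -/
def FSA.startAt {A : Type u} {Q : Type v} (M : FSA A Q) (x : Q) : FSA A Q :=
  { M with start := {x} }

/-- ALTL formulas: LTL where counter-free finite automata over the alphabet
`2^V` may appear as formulas. -/
inductive ALTL (V : Type) : Type 1 where
  | atom : V → ALTL V
  | neg : ALTL V → ALTL V
  | conj : ALTL V → ALTL V → ALTL V
  | untl : ALTL V → ALTL V → ALTL V
  | next : ALTL V → ALTL V
  | auto : (Q : Type) → Finite Q → FSA (Set V) Q → ALTL V

/-- `g_V(σ≤(n-1))` : the word of labels of the first `n` worlds of `σ`. -/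
def wordUpto (M : KStruct V W) (σ : ℕ → W) (n : ℕ) : List (Set V) :=
  (List.range n).map fun k => M.val (σ k)

/-- Truth of an ALTL formula on a fullpath. -/
def asat (M : KStruct V W) : ALTL V → (ℕ → W) → Prop
  | .atom p, σ => p ∈ M.val (σ 0)
  | .neg φ, σ => ¬ asat M φ σ
  | .conj φ ψ, σ => asat M φ σ ∧ asat M ψ σ
  | .untl φ ψ, σ => ∃ i, asat M ψ (suffix σ i) ∧ ∀ j < i, asat M φ (suffix σ j)
  | .next φ, σ => asat M φ (suffix σ 1)
  | .auto _ _ A, σ => ∃ i : ℕ, A.acceptsWord (wordUpto M σ (i + 1))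

/-- Membership in the closure `cl φ` of the formula `root`. -/
inductive InCl {V : Type} (root : ALTL V) : ALTL V → Prop where
  | base : InCl root root
  | negE {φ} : InCl root (.neg φ) → InCl root φ
  | conjL {φ ψ} : InCl root (.conj φ ψ) → InCl root φ
  | conjR {φ ψ} : InCl root (.conj φ ψ) → InCl root ψ
  | untlL {φ ψ} : InCl root (.untl φ ψ) → InCl root φ
  | untlR {φ ψ} : InCl root (.untl φ ψ) → InCl root ψ
  | nextE {φ} : InCl root (.next φ) → InCl root φ
  | negI {φ} : InCl root φ → (∀ ψ, φ ≠ ALTL.neg ψ) → InCl root (.neg φ)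
  | state {Q : Type} {hQ : Finite Q} {A : FSA (Set V) Q} (x : Q) :
      InCl root (.auto Q hQ A) → InCl root (.auto Q hQ (A.startAt x))

/-- Maximal propositional consistency with respect to the closure of `root`. -/
def MPC (root : ALTL V) (s : Set (ALTL V)) : Prop :=
  (∀ φ : ALTL V, InCl root (.neg φ) → (ALTL.neg φ ∈ s ↔ φ ∉ s)) ∧
  (∀ φ ψ : ALTL V, InCl root (.conj φ ψ) → (ALTL.conj φ ψ ∈ s ↔ φ ∈ s ∧ ψ ∈ s))

/-- `⋀ s` is satisfiable. -/
def SatSet {V : Type} (s : Set (ALTL V)) : Prop :=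
  ∃ (W : Type) (M : KStruct V W) (σ : ℕ → W),
    M.Serial ∧ IsFullpath M σ ∧ ∀ φ ∈ s, asat M φ σ

/-- The states `S_φ` of the automaton `A_φ` : maximally propositionally
consistent, until-coherent, non-contradictory subsets of the closure. -/
def IsState (root : ALTL V) (s : Set (ALTL V)) : Prop :=
  (∀ φ ∈ s, InCl root φ) ∧ MPC root s ∧
  (∀ α β : ALTL V, ALTL.untl α β ∈ s → α ∈ s ∨ β ∈ s) ∧
  (∀ α β : ALTL V, ALTL.neg (ALTL.untl α β) ∈ s → β ∉ s) ∧
  SatSet s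

/-- The conditions T1–T4 on a transition ⟨s, e, t⟩ of `A_φ`. -/
def DeltaCond (root : ALTL V) (s : Set (ALTL V)) (e : Set V) (t : Set (ALTL V)) : Prop :=
  (∀ α : ALTL V, ALTL.next α ∈ s → α ∈ t) ∧
  (∀ α : ALTL V, ALTL.neg (ALTL.next α) ∈ s → α ∉ t) ∧
  (∀ α β : ALTL V, ALTL.untl α β ∈ s → β ∉ s → ALTL.untl α β ∈ t) ∧
  (∀ α β : ALTL V, ALTL.neg (ALTL.untl α β) ∈ s → α ∈ s → ALTL.neg (ALTL.untl α β) ∈ t) ∧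
  (∀ p : V, InCl root (.atom p) → (ALTL.atom p ∈ s ↔ p ∈ e)) ∧
  (∀ (Q : Type) (hQ : Finite Q) (A : FSA (Set V) Q) (x : Q),
    ALTL.auto Q hQ (A.startAt x) ∈ s → x ∉ A.accept →
      ∃ y : Q, A.trans x e y ∧ ALTL.auto Q hQ (A.startAt y) ∈ t) ∧
  (∀ (Q : Type) (hQ : Finite Q) (A : FSA (Set V) Q) (x : Q),
    ALTL.neg (ALTL.auto Q hQ (A.startAt x)) ∈ s →
      ∀ y : Q, A.trans x e y → ALTL.auto Q hQ (A.startAt y) ∉ t)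

/-- The transition relation `δ_φ` of the automaton `A_φ`. -/
def PhiTrans (root : ALTL V) (s : Set (ALTL V)) (e : Set V) (t : Set (ALTL V)) : Prop :=
  IsState root s ∧ IsState root t ∧ DeltaCond root s e t

/-- Initial states `Q_0` of `A_φ`. -/
def PhiInit (root : ALTL V) (s : Set (ALTL V)) : Prop := IsState root s ∧ root ∈ s

/-- `A_φ` accepts the pair `(π, i)` : there is a state `s ∈ S_φ` such that some
run of `A_φ` labelled `g_V(π≤(i-1))` ends in `s`, and `π≥i ⊨ ⋀s`. -/
def AcceptsPair (root : ALTL V) (M : KStruct V W) (π : ℕ → W) (i : ℕ) : Prop :=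
  ∃ s : Set (ALTL V), IsState root s ∧
    (∃ q : Set (ALTL V), PhiInit root q ∧ ReachesVia (PhiTrans root) q (wordUpto M π i) s) ∧
    ∀ ψ ∈ s, asat M ψ (suffix π i)
/-- ALTL abbreviations. -/
def atop (viol : V) : ALTL V := .neg (.conj (.atom viol) (.neg (.atom viol)))
def aor (a b : ALTL V) : ALTL V := .neg (.conj (.neg a) (.neg b))
def aimp (a b : ALTL V) : ALTL V := aor (.neg a) b
def aG (viol : V) (a : ALTL V) : ALTL V := .neg (.untl (atop viol) (.neg a))
/-- NG¬v. -/
def ngnv (viol : V) : ALTL V := .next (aG viol (.neg (.atom viol)))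

theorem IsFullpath.suffix {M : KStruct V W} {σ : ℕ → W} (h : IsFullpath M σ) (n : ℕ) :
    IsFullpath M (suffix σ n) := fun i => by
  simpa only [Stmt14.suffix, Nat.add_right_comm] using h (i + n)

theorem asat_aor (M : KStruct V W) (a b : ALTL V) (σ : ℕ → W) :
    asat M (aor a b) σ ↔ asat M a σ ∨ asat M b σ := by
  simp only [aor, asat, not_and_or, not_not]

theorem asat_aimp (M : KStruct V W) (a b : ALTL V) (σ : ℕ → W) :
    asat M (aimp a b) σ ↔ (asat M a σ → asat M b σ) := by
  simp only [aimp, asat_aor, asat, imp_iff_not_or]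

theorem asat_ngnv (M : KStruct V W) (viol : V) (σ : ℕ → W) :
    asat M (ngnv viol) σ ↔ FailureFree M viol σ := by
  simp only [ngnv, aG, atop, asat, suffix, Nat.zero_add, not_not]
  constructor
  · intro h i hi hv
    obtain ⟨j, rfl⟩ := Nat.exists_eq_add_one.mpr hi
    exact h ⟨j, hv, fun k _ hc => hc.2 hc.1⟩
  · rintro h ⟨j, hj, -⟩
    exact h (j + 1) j.succ_pos hj

def Agrees (M : KStruct V W) (viol : V) (φ : Form V) (a : ALTL V) : Prop :=
  ∀ σ, IsFullpath M σ → (sat M viol φ σ ↔ asat M a σ)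

namespace Agrees

variable {M : KStruct V W} {viol : V} {φ ψ : Form V} {a b : ALTL V}

theorem atom (p : V) : Agrees M viol (.atom p) (.atom p) := fun _ _ => Iff.rfl

theorem neg (h : Agrees M viol φ a) : Agrees M viol (.neg φ) (.neg a) :=
  fun σ hσ => (h σ hσ).not

theorem conj (hφ : Agrees M viol φ a) (hψ : Agrees M viol ψ b) :
    Agrees M viol (.conj φ ψ) (.conj a b) :=
  fun σ hσ => and_congr (hφ σ hσ) (hψ σ hσ)

theorem untl (hφ : Agrees M viol φ a) (hψ : Agrees M viol ψ b) :
    Agrees M viol (.untl φ ψ) (.untl a b) := fun _ hσ =>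
  exists_congr fun i => and_congr (hψ _ (hσ.suffix i))
    (forall₂_congr fun j _ => hφ _ (hσ.suffix j))

theorem next (h : Agrees M viol φ a) : Agrees M viol (.next φ) (.next a) :=
  fun _ hσ => h _ (hσ.suffix 1)

theorem fall (h : Agrees M viol φ a) {p : V}
    (hp : ∀ w, p ∈ M.val w ↔ ∀ π, IsFullpath M π → π 0 = w → asat M a π) :
    Agrees M viol (.fall φ) (.atom p) := fun _ _ => by
  rw [sat, asat, hp]
  exact forall₂_congr fun π hπ => imp_congr_right fun _ => h π hπ

theorem oblig (h : Agrees M viol φ a) {p : V}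
    (hp : ∀ w, p ∈ M.val w ↔
      ∀ π, IsFullpath M π → π 0 = w → asat M (aimp (ngnv viol) a) π) :
    Agrees M viol (.oblig φ) (.atom p) := fun _ _ => by
  rw [sat, asat, hp]
  refine forall₂_congr fun π hπ => imp_congr_right fun _ => ?_
  rw [asat_aimp, asat_ngnv]
  exact imp_congr_right fun _ => h π hπ

/-- `f` plays the role of `A_{Λ¬a}`: it holds exactly where some deviation satisfies `¬a`. -/
theorem robust (h : Agrees M viol φ a) {f : ALTL V}
    (hf : ∀ σ, IsFullpath M σ →
      (asat M f σ ↔ ∃ π, IsFullpath M π ∧ IsDeviation M viol σ π ∧ asat M (.neg a) π)) :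
    Agrees M viol (.robust φ) (.neg (aor (.neg a) f)) := fun σ hσ => by
  have hdev : (∀ π, IsFullpath M π → IsDeviation M viol σ π → sat M viol φ π) ↔
      ¬ asat M f σ := by
    rw [hf σ hσ]
    push Not
    exact forall₂_congr fun π hπ => imp_congr_right fun _ => (h π hπ).trans not_not.symm
  rw [sat, asat, asat_aor, not_or, hdev, asat, not_not, h σ hσ]

end Agrees

/-- Here `pA ψ` is the atom `p_{Aψ}` and `fdev ψ` is the automaton formula `A_{Λψ}`, each given
by its characteristic property `hpA`, resp. `hfdev`. -/
theorem rho_truth_preserving_general {V W : Type} (viol : V) (pA : ALTL V → V)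
    (M : KStruct V W)
    (hpA : ∀ (ψ : ALTL V) (w : W),
      pA ψ ∈ M.val w ↔ ∀ π, IsFullpath M π → π 0 = w → asat M ψ π)
    (fdev : ALTL V → ALTL V)
    (hfdev : ∀ (ψ : ALTL V) (σ : ℕ → W), IsFullpath M σ →
      (asat M (fdev ψ) σ ↔ ∃ π, IsFullpath M π ∧ IsDeviation M viol σ π ∧ asat M ψ π))
    (ρ : Form V → ALTL V)
    (hatom : ∀ p : V, ρ (.atom p) = .atom p)
    (hneg : ∀ φ, ρ (.neg φ) = .neg (ρ φ))
    (hconj : ∀ φ ψ, ρ (.conj φ ψ) = .conj (ρ φ) (ρ ψ))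
    (huntl : ∀ φ ψ, ρ (.untl φ ψ) = .untl (ρ φ) (ρ ψ))
    (hnext : ∀ φ, ρ (.next φ) = .next (ρ φ))
    (hfall : ∀ φ, ρ (.fall φ) = .atom (pA (ρ φ)))
    (hoblig : ∀ φ, ρ (.oblig φ) = .atom (pA (aimp (ngnv viol) (ρ φ))))
    (hrobust : ∀ φ, ρ (.robust φ) = .neg (aor (.neg (ρ φ)) (fdev (.neg (ρ φ)))))
    (φ : Form V) (σ : ℕ → W) (hσ : IsFullpath M σ) :
    sat M viol φ σ ↔ asat M (ρ φ) σ := by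
  suffices h : Agrees M viol φ (ρ φ) from h σ hσ
  induction φ with
  | atom p => rw [hatom]; exact .atom p
  | neg φ ih => rw [hneg]; exact ih.neg
  | conj φ ψ ihφ ihψ => rw [hconj]; exact ihφ.conj ihψ
  | untl φ ψ ihφ ihψ => rw [huntl]; exact ihφ.untl ihψ
  | next φ ih => rw [hnext]; exact ih.next
  | fall φ ih => rw [hfall]; exact ih.fall (hpA _)
  | oblig φ ih => rw [hoblig]; exact ih.oblig (hpA _)
  | robust φ ih => rw [hrobust]; exact ih.robust (hfdev _)

/-- The translation ρ from RoCTL* into ALTL is truth-preserving.  Here `pA` gives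
the state-formula atom `p_{Aψ}` for each ALTL formula ψ (valued by `M` at exactly
the worlds where `Aψ` holds), `fdev ψ` is the automaton formula `A_{Λψ}` of the
`A_{Λ}` construction - whose characteristic property is that it holds on a
fullpath iff ψ holds on some deviation from it - and ρ is any function satisfying
the defining equations of the translation, in particular
ρ(▲φ) = ¬f_▽(¬ρ(φ)) with f_▽(ψ) = ψ ∨ A_{Λψ},
ρ(Aφ) = p_{Aρ(φ)} and ρ(Oφ) = p_{A(NG¬v → ρ(φ))}. -/
theorem rho_truth_preserving {V W : Type} (viol : V) (pA : ALTL V → V)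
    (M : KStruct V W) (hM : IsRoCTL M viol)
    (hpA : ∀ (ψ : ALTL V) (w : W),
      pA ψ ∈ M.val w ↔ ∀ π, IsFullpath M π → π 0 = w → asat M ψ π)
    (fdev : ALTL V → ALTL V)
    (hfdevAuto : ∀ ψ : ALTL V, ∃ (Q : Type) (hQ : Finite Q) (A : FSA (Set V) Q),
      fdev ψ = .auto Q hQ A)
    (hfdev : ∀ (ψ : ALTL V) (σ : ℕ → W), IsFullpath M σ →
      (asat M (fdev ψ) σ ↔ ∃ π, IsFullpath M π ∧ IsDeviation M viol σ π ∧ asat M ψ π))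
    (ρ : Form V → ALTL V)
    (hatom : ∀ p : V, ρ (.atom p) = .atom p)
    (hneg : ∀ φ, ρ (.neg φ) = .neg (ρ φ))
    (hconj : ∀ φ ψ, ρ (.conj φ ψ) = .conj (ρ φ) (ρ ψ))
    (huntl : ∀ φ ψ, ρ (.untl φ ψ) = .untl (ρ φ) (ρ ψ))
    (hnext : ∀ φ, ρ (.next φ) = .next (ρ φ))
    (hfall : ∀ φ, ρ (.fall φ) = .atom (pA (ρ φ)))
    (hoblig : ∀ φ, ρ (.oblig φ) = .atom (pA (aimp (ngnv viol) (ρ φ))))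
    (hrobust : ∀ φ, ρ (.robust φ) = .neg (aor (.neg (ρ φ)) (fdev (.neg (ρ φ)))))
    (φ : Form V) (hVF : ViolFree viol φ) (σ : ℕ → W) (hσ : IsFullpath M σ) :
    sat M viol φ σ ↔ asat M (ρ φ) σ :=
  rho_truth_preserving_general viol pA M hpA fdev hfdev ρ hatom hneg hconj huntl hnext hfall hoblig
    hrobust φ σ hσ

end Stmt14
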